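/- arXiv:2403.03208 — 3 statements merged into one kernel-verified Lean document; each statement's English description precedes it below -/
import Mathlib

section
/- The variance of the active mean estimator increment satisfies Var(f(X) + (Y − f(X))·ξ/π(X)) = Var(Y) + E[(Y − f(X))²·(1/π(X) − 1)], where ξ | (X,Y) ~ Bernoulli(π(X)). -/
open MeasureTheory ProbabilityTheory
open scoped ENNReal

/-! Conditionally on `σ(X, Y)`, the increment `f(X) + W ξ` with `W = (Y - f(X)) / π(X)` has
mean `f(X) + W π(X) = Y` and, because `ξ² = ξ`, variance `W² π(X) (1 - π(X))`, which equals
`(Y - f(X))² (1 / π(X) - 1)`; the identity is the law of total variance. The analytic input is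
the pull-out identity `E[h ξ] = E[h π(X)]` for `σ(X, Y)`-measurable `h`, including the
integrability of `h ξ`: for `ξ ≥ 0` it comes from comparing the measures with densities `ξ` and
`E[ξ | σ(X, Y)]` on `σ(X, Y)`-measurable sets. -/

section

variable {Ω : Type*} {m mΩ : MeasurableSpace Ω} {μ : Measure[mΩ] Ω}

theorem lintegral_mul_condLExp (hm : m ≤ mΩ) [SigmaFinite (μ.trim hm)] {h X : Ω → ℝ≥0∞}
    (hh : Measurable[m] h) (hX : AEMeasurable X μ) :
    ∫⁻ ω, h ω * μ⁻[X|m] ω ∂μ = ∫⁻ ω, h ω * X ω ∂μ := by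
  have htrim : (μ.withDensity μ⁻[X|m]).trim hm = (μ.withDensity X).trim hm := by
    refine @Measure.ext _ m _ _ fun s hs => ?_
    rw [trim_measurableSet_eq hm hs, trim_measurableSet_eq hm hs, withDensity_apply _ (hm s hs),
      withDensity_apply _ (hm s hs), setLIntegral_condLExp hm μ X hs]
  have hh' : Measurable h := hh.mono hm le_rfl
  calc ∫⁻ ω, h ω * μ⁻[X|m] ω ∂μ = ∫⁻ ω, h ω ∂(μ.withDensity μ⁻[X|m]).trim hm := by
        rw [lintegral_trim hm hh, lintegral_withDensity_eq_lintegral_mul _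
          ((measurable_condLExp m μ X).mono hm le_rfl) hh']
        simp only [Pi.mul_apply, mul_comm]
    _ = ∫⁻ ω, h ω * X ω ∂μ := by
        rw [htrim, lintegral_trim hm hh,
          lintegral_withDensity_eq_lintegral_mul₀ hX hh'.aemeasurable]
        simp only [Pi.mul_apply, mul_comm]

theorem lintegral_mul_ofReal_condExp (hm : m ≤ mΩ) [SigmaFinite (μ.trim hm)] {h : Ω → ℝ≥0∞}
    {ξ : Ω → ℝ} (hh : Measurable[m] h) (hξ : Integrable ξ μ) (hξ₀ : 0 ≤ᵐ[μ] ξ) :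
    ∫⁻ ω, h ω * ENNReal.ofReal (μ[ξ|m] ω) ∂μ = ∫⁻ ω, h ω * ENNReal.ofReal (ξ ω) ∂μ := by
  rw [← lintegral_mul_condLExp hm hh hξ.1.aemeasurable.ennreal_ofReal]
  refine lintegral_congr_ae ?_
  filter_upwards [condLExp_ofReal m hξ hξ₀] with ω hω
  rw [hω]

variable {h ξ p : Ω → ℝ}

theorem integrable_mul_of_condExp_ae_eq (hm : m ≤ mΩ) [SigmaFinite (μ.trim hm)]
    (hh : StronglyMeasurable[m] h) (hξ : Integrable ξ μ) (hξ₀ : 0 ≤ᵐ[μ] ξ)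
    (hp : μ[ξ|m] =ᵐ[μ] p) (hhp : Integrable (fun ω => h ω * p ω) μ) :
    Integrable (fun ω => h ω * ξ ω) μ := by
  refine ⟨(hh.mono hm).aestronglyMeasurable.mul hξ.1, ?_⟩
  calc ∫⁻ ω, ‖h ω * ξ ω‖ₑ ∂μ = ∫⁻ ω, ‖h ω‖ₑ * ENNReal.ofReal (ξ ω) ∂μ := by
        refine lintegral_congr_ae ?_
        filter_upwards [hξ₀] with ω hω
        rw [enorm_mul, Real.enorm_eq_ofReal hω]
    _ = ∫⁻ ω, ‖h ω * p ω‖ₑ ∂μ := by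
        rw [← lintegral_mul_ofReal_condExp hm hh.enorm hξ hξ₀]
        refine lintegral_congr_ae ?_
        filter_upwards [condExp_nonneg hξ₀ (m := m), hp] with ω hω₀ hω
        rw [enorm_mul, ← hω, Real.enorm_eq_ofReal hω₀]
    _ < ∞ := hhp.2

theorem integral_mul_of_condExp_ae_eq (hm : m ≤ mΩ) [SigmaFinite (μ.trim hm)]
    (hh : StronglyMeasurable[m] h) (hξ : Integrable ξ μ) (hp : μ[ξ|m] =ᵐ[μ] p)
    (hhξ : Integrable (fun ω => h ω * ξ ω) μ) :
    ∫ ω, h ω * ξ ω ∂μ = ∫ ω, h ω * p ω ∂μ := by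
  rw [← integral_condExp hm]
  refine integral_congr_ae ?_
  filter_upwards [condExp_mul_of_stronglyMeasurable_left hh hhξ hξ, hp] with ω h1 h2
  rw [Pi.mul_apply, h2] at h1
  exact h1

theorem integral_add_mul_of_condExp_ae_eq (hm : m ≤ mΩ) [SigmaFinite (μ.trim hm)] {a : Ω → ℝ}
    (ha : Integrable a μ) (hh : StronglyMeasurable[m] h) (hξ : Integrable ξ μ) (hξ₀ : 0 ≤ᵐ[μ] ξ)
    (hp : μ[ξ|m] =ᵐ[μ] p) (hhp : Integrable (fun ω => h ω * p ω) μ) :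
    ∫ ω, a ω + h ω * ξ ω ∂μ = ∫ ω, a ω + h ω * p ω ∂μ := by
  have hhξ := integrable_mul_of_condExp_ae_eq hm hh hξ hξ₀ hp hhp
  rw [integral_add ha hhξ, integral_add ha hhp, integral_mul_of_condExp_ae_eq hm hh hξ hp hhξ]

theorem variance_add_mul_of_condExp_ae_eq [IsProbabilityMeasure μ] {A W : Ω → ℝ} (hm : m ≤ mΩ)
    (hA : StronglyMeasurable[m] A) (hW : StronglyMeasurable[m] W)
    (hξ : AEStronglyMeasurable ξ μ) (hξ01 : ∀ ω, ξ ω = 0 ∨ ξ ω = 1) (hp : μ[ξ|m] =ᵐ[μ] p)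
    (hA2 : MemLp A 2 μ) (hWp2 : MemLp (fun ω => W ω * p ω) 2 μ)
    (hW2p : Integrable (fun ω => W ω ^ 2 * p ω) μ) :
    variance (fun ω => A ω + W ω * ξ ω) μ
      = variance (fun ω => A ω + W ω * p ω) μ + ∫ ω, W ω ^ 2 * (p ω * (1 - p ω)) ∂μ := by
  have hξint : Integrable ξ μ := (integrable_const (1 : ℝ)).mono' hξ
    (.of_forall fun ω => by rcases hξ01 ω with h | h <;> simp [h])
  have hξ₀ : 0 ≤ᵐ[μ] ξ := .of_forall fun ω => by rcases hξ01 ω with h | h <;> simp [h]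
  have hA1 := hA2.integrable one_le_two
  have hWξ := integrable_mul_of_condExp_ae_eq hm hW hξint hξ₀ hp (hWp2.integrable one_le_two)
  set V := fun ω => 2 * A ω * W ω + W ω ^ 2 with hV
  have hVm : StronglyMeasurable[m] V := ((hA.const_mul 2).mul hW).add (hW.pow 2)
  have hVp : Integrable (fun ω => V ω * p ω) μ :=
    (((hA2.integrable_mul hWp2).const_mul 2).add hW2p).congr
      (.of_forall fun ω => by simp only [hV, Pi.add_apply, Pi.mul_apply]; ring)
  have hZsq : (fun ω => (A ω + W ω * ξ ω) ^ 2) = fun ω => A ω ^ 2 + V ω * ξ ω := by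
    funext ω; rcases hξ01 ω with h | h <;> simp only [hV, h] <;> ring
  have hZ2 : MemLp (fun ω => A ω + W ω * ξ ω) 2 μ :=
    (memLp_two_iff_integrable_sq (hA1.1.add hWξ.1)).2 <| by
      simp only [Pi.add_apply]
      rw [hZsq]
      exact hA2.integrable_sq.add (integrable_mul_of_condExp_ae_eq hm hVm hξint hξ₀ hp hVp)
  have hAWp2 : MemLp (fun ω => A ω + W ω * p ω) 2 μ := hA2.add hWp2
  have hsecond : ∫ ω, A ω ^ 2 + V ω * p ω ∂μ
      = ∫ ω, (A ω + W ω * p ω) ^ 2 ∂μ + ∫ ω, W ω ^ 2 * (p ω * (1 - p ω)) ∂μ := by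
    have hR : Integrable (fun ω => W ω ^ 2 * (p ω * (1 - p ω))) μ :=
      (hW2p.sub hWp2.integrable_sq).congr (.of_forall fun ω => by simp only [Pi.sub_apply]; ring)
    rw [← integral_add hAWp2.integrable_sq hR]
    exact integral_congr_ae (.of_forall fun ω => by simp only [hV]; ring)
  rw [variance_eq_sub hZ2, variance_eq_sub hAWp2]
  simp only [Pi.pow_apply]
  rw [hZsq, integral_add_mul_of_condExp_ae_eq hm hA2.integrable_sq hVm hξint hξ₀ hp hVp,
    integral_add_mul_of_condExp_ae_eq hm hA1 hW hξint hξ₀ hp (hWp2.integrable one_le_two),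
    hsecond]
  ring

end

/-- **Variance of the active mean estimator increment.**
With `ξ | (X,Y) ~ Bernoulli(π(X))`,
`Var(f(X) + (Y − f(X))·ξ/π(X)) = Var(Y) + E[(Y − f(X))²·(1/π(X) − 1)]`. -/
theorem active_mean_estimator_variance
    {Ω 𝒳 : Type*} [MeasurableSpace Ω] [MeasurableSpace 𝒳]
    (μ : Measure Ω) [IsProbabilityMeasure μ]
    (X : Ω → 𝒳) (Y : Ω → ℝ) (ξ : Ω → ℝ) (f : 𝒳 → ℝ) (π : 𝒳 → ℝ)
    (hX : Measurable X) (hYmeas : Measurable Y) (hξmeas : Measurable ξ)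
    (hf : Measurable f) (hπ : Measurable π)
    (hπ01 : ∀ x, π x ∈ Set.Ioc (0 : ℝ) 1)
    (hξ01 : ∀ ω, ξ ω = 0 ∨ ξ ω = 1)
    -- ξ | (X, Y) ~ Bernoulli(π(X))
    (hBern : μ[ξ | MeasurableSpace.comap (fun ω => (X ω, Y ω)) inferInstance]
        =ᵐ[μ] fun ω => π (X ω))
    (hY2 : MemLp Y 2 μ) (hf2 : MemLp (fun ω => f (X ω)) 2 μ)
    (hint : Integrable (fun ω => (Y ω - f (X ω)) ^ 2 / π (X ω)) μ) :
    variance (fun ω => f (X ω) + (Y ω - f (X ω)) * ξ ω / π (X ω)) μ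
      = variance Y μ + ∫ ω, (Y ω - f (X ω)) ^ 2 * (1 / π (X ω) - 1) ∂μ := by
  have hXY : Measurable[MeasurableSpace.comap (fun ω => (X ω, Y ω)) inferInstance]
      fun ω => (X ω, Y ω) := Measurable.of_comap_le le_rfl
  have hπX : ∀ ω, π (X ω) ≠ 0 := fun ω => (hπ01 (X ω)).1.ne'
  have hfX := hf.comp (measurable_fst.comp hXY)
  have hW := ((measurable_snd.comp hXY).sub hfX).div (hπ.comp (measurable_fst.comp hXY))
  have hWπ : ∀ ω, (Y ω - f (X ω)) / π (X ω) * π (X ω) = Y ω - f (X ω) :=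
    fun ω => div_mul_cancel₀ _ (hπX ω)
  have key := variance_add_mul_of_condExp_ae_eq (A := fun ω => f (X ω))
    (W := fun ω => (Y ω - f (X ω)) / π (X ω)) (hX.prodMk hYmeas).comap_le hfX.stronglyMeasurable
    hW.stronglyMeasurable hξmeas.aestronglyMeasurable hξ01 hBern hf2
    (by convert hY2.sub hf2 using 1; exact funext hWπ)
    (hint.congr (.of_forall fun ω => by field_simp [hπX ω]))
  convert key using 3
  · rw [mul_div_right_comm]
  · exact funext fun ω => by rw [hWπ, add_sub_cancel]
  · exact funext fun ω => by field_simp [hπX ω]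
end

section
/- Among all measurable sampling rules π : X → (0,1] satisfying the budget constraint E[π(X)] ≤ p, the objective E[(Y − f(X))²/π(X)] is minimized by π_opt(X) = p·√(E[(Y−f(X))²|X]) / E[√(E[(Y−f(X))²|X])], provided this rule takes values in (0,1]. -/
/-!
Write `h = (Y − f(X))²` and `g = √E[h | X]`. For a rule `π(X)` the factor `1/π(X)` is
`σ(X)`-measurable, so pulling it out of the conditional expectation gives
`E[h/π(X)] = E[g²/π(X)]`. With `c = E[g]/p`, the pointwise bound
`g²/π ≥ 2cg − c²π` (equivalent to `(g − cπ)² ≥ 0`) integrates, under the budget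
`E[π] ≤ p`, to `E[g²/π] ≥ 2cE[g] − c²p = E[g]²/p`. For `π_opt` the ratio `g²/π_opt` is
`c·g`, so the bound is attained.
-/

open MeasureTheory

section

variable {Ω : Type*} {m m₀ : MeasurableSpace Ω} {μ : Measure Ω}

theorem condExp_div_ae_eq_of_condExp_ae_eq (hm : m ≤ m₀) [SigmaFinite (μ.trim hm)]
    {h π G : Ω → ℝ} (hπ : StronglyMeasurable[m] π) (hh : Integrable h μ)
    (hhπ : Integrable (fun ω => h ω / π ω) μ) (hG : μ[h | m] =ᵐ[μ] G) :
    μ[fun ω => h ω / π ω | m] =ᵐ[μ] fun ω => G ω / π ω := by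
  simp only [div_eq_mul_inv] at hhπ ⊢
  filter_upwards [condExp_mul_of_aestronglyMeasurable_right
    hπ.measurable.inv.stronglyMeasurable.aestronglyMeasurable hhπ hh, hG] with ω hω hGω
  exact hω.trans (by rw [Pi.mul_apply, hGω, Pi.inv_apply])

theorem integrable_div_of_condExp_ae_eq (hm : m ≤ m₀) [SigmaFinite (μ.trim hm)]
    {h π G : Ω → ℝ} (hπ : StronglyMeasurable[m] π) (hh : Integrable h μ)
    (hhπ : Integrable (fun ω => h ω / π ω) μ) (hG : μ[h | m] =ᵐ[μ] G) :
    Integrable (fun ω => G ω / π ω) μ :=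
  integrable_condExp.congr (condExp_div_ae_eq_of_condExp_ae_eq hm hπ hh hhπ hG)

theorem integral_div_eq_of_condExp_ae_eq (hm : m ≤ m₀) [SigmaFinite (μ.trim hm)]
    {h π G : Ω → ℝ} (hπ : StronglyMeasurable[m] π) (hh : Integrable h μ)
    (hhπ : Integrable (fun ω => h ω / π ω) μ) (hG : μ[h | m] =ᵐ[μ] G) :
    ∫ ω, h ω / π ω ∂μ = ∫ ω, G ω / π ω ∂μ := by
  rw [← integral_condExp hm,
    integral_congr_ae (condExp_div_ae_eq_of_condExp_ae_eq hm hπ hh hhπ hG)]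

theorem integrable_of_integrable_div {h π : Ω → ℝ} (hh : AEStronglyMeasurable h μ)
    (hπ : ∀ᵐ ω ∂μ, π ω ∈ Set.Ioc (0 : ℝ) 1) (hhπ : Integrable (fun ω => h ω / π ω) μ) :
    Integrable h μ := by
  refine hhπ.mono hh ?_
  filter_upwards [hπ] with ω ⟨hπ0, hπ1⟩
  rw [norm_div, Real.norm_of_nonneg hπ0.le]
  exact le_div_self (norm_nonneg _) hπ0 hπ1

end

theorem two_mul_mul_sub_sq_mul_le_sq_div (a c : ℝ) {t : ℝ} (ht : 0 < t) :
    2 * c * a - c ^ 2 * t ≤ a ^ 2 / t := by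
  rw [le_div_iff₀ ht]
  nlinarith [sq_nonneg (a - c * t)]

theorem sq_div_mul_div (a c p : ℝ) : a ^ 2 / (p * a / c) = c / p * a := by
  rcases eq_or_ne a 0 with rfl | ha
  · simp
  · field_simp

theorem sq_integral_div_le_integral_sq_div {Ω : Type*} {mΩ : MeasurableSpace Ω} {μ : Measure Ω}
    {G π : Ω → ℝ} {p : ℝ} (hp : 0 < p) (hG : Integrable G μ) (hπ : Integrable π μ)
    (hπpos : ∀ᵐ ω ∂μ, 0 < π ω) (hπp : ∫ ω, π ω ∂μ ≤ p)
    (hGπ : Integrable (fun ω => G ω ^ 2 / π ω) μ) :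
    (∫ ω, G ω ∂μ) ^ 2 / p ≤ ∫ ω, G ω ^ 2 / π ω ∂μ := by
  set c := (∫ ω, G ω ∂μ) / p
  calc (∫ ω, G ω ∂μ) ^ 2 / p = 2 * c * ∫ ω, G ω ∂μ - c ^ 2 * p := by
        simp only [c]; field_simp; ring
    _ ≤ 2 * c * ∫ ω, G ω ∂μ - c ^ 2 * ∫ ω, π ω ∂μ := by gcongr
    _ = ∫ ω, 2 * c * G ω - c ^ 2 * π ω ∂μ := by
        rw [integral_sub (hG.const_mul _) (hπ.const_mul _), integral_const_mul,
          integral_const_mul]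
    _ ≤ ∫ ω, G ω ^ 2 / π ω ∂μ :=
        integral_mono_ae ((hG.const_mul _).sub (hπ.const_mul _)) hGπ
          (hπpos.mono fun ω hω => two_mul_mul_sub_sq_mul_le_sq_div _ _ hω)

theorem oracle_sampling_rule_optimal_general
    {Ω 𝒳 : Type*} [MeasurableSpace Ω] [MeasurableSpace 𝒳]
    (μ : Measure Ω) [IsProbabilityMeasure μ]
    (X : Ω → 𝒳) (Y : Ω → ℝ) (f : 𝒳 → ℝ) (p : ℝ)
    (hX : Measurable X) (hY : Measurable Y) (hf : Measurable f)
    (hp : p ∈ Set.Ioo (0 : ℝ) 1)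
    -- g(X) = √(E[(Y − f(X))² | X])
    (g : Ω → ℝ)
    (hg : g = fun ω => Real.sqrt
      ((μ[(fun ω' => (Y ω' - f (X ω')) ^ 2) | MeasurableSpace.comap X inferInstance]) ω))
    (hgint : Integrable g μ)
    -- π_opt(X) = p·g(X)/E[g(X)], assumed to take values in (0,1]
    (πopt : Ω → ℝ)
    (hπopt : πopt = fun ω => p * g ω / ∫ ω', g ω' ∂μ)
    (hπopt1 : ∀ᵐ ω ∂μ, πopt ω ∈ Set.Ioc (0 : ℝ) 1)
    (hoptint : Integrable (fun ω => (Y ω - f (X ω)) ^ 2 / πopt ω) μ) :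
    (∀ π : 𝒳 → ℝ, Measurable π →
        (∀ᵐ ω ∂μ, π (X ω) ∈ Set.Ioc (0 : ℝ) 1) →
        (∫ ω, π (X ω) ∂μ) ≤ p →
        Integrable (fun ω => (Y ω - f (X ω)) ^ 2 / π (X ω)) μ →
        ∫ ω, (Y ω - f (X ω)) ^ 2 / πopt ω ∂μ
          ≤ ∫ ω, (Y ω - f (X ω)) ^ 2 / π (X ω) ∂μ) ∧
      ∫ ω, (Y ω - f (X ω)) ^ 2 / πopt ω ∂μ = (∫ ω, g ω ∂μ) ^ 2 / p := by
  set m := MeasurableSpace.comap X inferInstance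
  set h : Ω → ℝ := fun ω => (Y ω - f (X ω)) ^ 2
  have hm : m ≤ _ := hX.comap_le
  have hh : Integrable h μ := integrable_of_integrable_div
    ((hY.sub (hf.comp hX)).pow_const 2).aestronglyMeasurable hπopt1 hoptint
  have hg_sq : μ[h | m] =ᵐ[μ] fun ω => g ω ^ 2 := by
    filter_upwards [condExp_nonneg (ae_of_all μ fun ω => sq_nonneg (Y ω - f (X ω)))] with ω hω
    rw [hg, Real.sq_sqrt hω]
  have hπopt_meas : StronglyMeasurable[m] πopt := by
    rw [hπopt, hg]
    exact (((Real.continuous_sqrt.measurable.comp stronglyMeasurable_condExp.measurable).const_mul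
      p).div_const _).stronglyMeasurable
  have hopt : ∫ ω, h ω / πopt ω ∂μ = (∫ ω, g ω ∂μ) ^ 2 / p := by
    rw [integral_div_eq_of_condExp_ae_eq hm hπopt_meas hh hoptint hg_sq, hπopt]
    simp_rw [sq_div_mul_div, integral_const_mul]
    ring
  refine ⟨fun π hπ hπ01 hπp hπint => ?_, hopt⟩
  have hπX : StronglyMeasurable[m] fun ω => π (X ω) :=
    (hπ.comp (comap_measurable X)).stronglyMeasurable
  rw [hopt, integral_div_eq_of_condExp_ae_eq hm hπX hh hπint hg_sq]
  exact sq_integral_div_le_integral_sq_div hp.1 hgint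
    (.of_bound (hπ.comp hX).aestronglyMeasurable 1
      (hπ01.mono fun ω hω => (Real.norm_of_nonneg hω.1.le).trans_le hω.2))
    (hπ01.mono fun ω hω => hω.1) hπp (integrable_div_of_condExp_ae_eq hm hπX hh hπint hg_sq)

/-- **Optimality of the oracle sampling rule `π_opt(X) ∝ √(E[(Y−f(X))²|X])`.**
Let `g = √(E[(Y−f(X))²|X])` and `π_opt = p·g/E[g]`, assumed to take values in `(0,1]`.
Then among all sampling rules `π` with `0 < π(X) ≤ 1` a.s. and `E[π(X)] ≤ p`, the
objective `E[(Y−f(X))²/π(X)]` is minimized by `π_opt`, with minimum value `E[g]²/p`. -/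
theorem oracle_sampling_rule_optimal
    {Ω 𝒳 : Type*} [MeasurableSpace Ω] [MeasurableSpace 𝒳]
    (μ : Measure Ω) [IsProbabilityMeasure μ]
    (X : Ω → 𝒳) (Y : Ω → ℝ) (f : 𝒳 → ℝ) (p : ℝ)
    (hX : Measurable X) (hY : Measurable Y) (hf : Measurable f)
    (hp : p ∈ Set.Ioo (0 : ℝ) 1)
    -- g(X) = √(E[(Y − f(X))² | X])
    (g : Ω → ℝ)
    (hg : g = fun ω => Real.sqrt
      ((μ[(fun ω' => (Y ω' - f (X ω')) ^ 2) | MeasurableSpace.comap X inferInstance]) ω))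
    (hgpos : 0 < ∫ ω, g ω ∂μ) (hgint : Integrable g μ)
    -- π_opt(X) = p·g(X)/E[g(X)], assumed to take values in (0,1]
    (πopt : Ω → ℝ)
    (hπopt : πopt = fun ω => p * g ω / ∫ ω', g ω' ∂μ)
    (hπopt1 : ∀ᵐ ω ∂μ, πopt ω ∈ Set.Ioc (0 : ℝ) 1)
    (hoptint : Integrable (fun ω => (Y ω - f (X ω)) ^ 2 / πopt ω) μ) :
    (∀ π : 𝒳 → ℝ, Measurable π →
        (∀ᵐ ω ∂μ, π (X ω) ∈ Set.Ioc (0 : ℝ) 1) →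
        (∫ ω, π (X ω) ∂μ) ≤ p →
        Integrable (fun ω => (Y ω - f (X ω)) ^ 2 / π (X ω)) μ →
        ∫ ω, (Y ω - f (X ω)) ^ 2 / πopt ω ∂μ
          ≤ ∫ ω, (Y ω - f (X ω)) ^ 2 / π (X ω) ∂μ) ∧
      ∫ ω, (Y ω - f (X ω)) ^ 2 / πopt ω ∂μ = (∫ ω, g ω ∂μ) ^ 2 / p :=
  oracle_sampling_rule_optimal_general μ X Y f p hX hY hf hp g hg hgint πopt hπopt hπopt1 hoptint
end

section
/- If the sampling probabilities are allowed to depend on both X and Y, then the objective E[(Y − f(X))²/π̃(X,Y)] subject to E[π̃(X,Y)] ≤ p is minimized by π̃_opt(X,Y) = p·|Y − f(X)|/E[|Y − f(X)|], provided this takes values in (0,1]. -/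
/-!
Writing `e = Y − f(X)`, for every `c` and `t > 0` we have `e²/t ≥ 2c|e| − c²t`, since the
difference is `(|e| − ct)²/t`. Integrating against a rule `π̃` with `E[π̃] ≤ p` gives
`E[e²/π̃] ≥ 2c E|e| − c²p`, which for `c = E|e|/p` is `(E|e|)²/p`. The rule proportional to `|e|`
attains this bound, because `e²/π̃_opt = |e| · E|e|/p` pointwise.
-/

open MeasureTheory

lemma two_mul_mul_abs_sub_sq_mul_le_sq_div (c e : ℝ) {t : ℝ} (ht : 0 < t) :
    2 * c * |e| - c ^ 2 * t ≤ e ^ 2 / t := by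
  rw [le_div_iff₀ ht, ← sq_abs e]
  nlinarith [sq_nonneg (|e| - c * t)]

lemma sq_div_mul_abs_div (e p A : ℝ) : e ^ 2 / (p * |e| / A) = |e| * (A / p) := by
  rcases eq_or_ne e 0 with rfl | he
  · simp
  have habs : |e| ≠ 0 := abs_ne_zero.mpr he
  rw [div_div_eq_mul_div, ← sq_abs, sq, mul_assoc, mul_comm p, mul_div_mul_left _ _ habs,
    mul_div_assoc]

section

variable {Ω : Type*} [MeasurableSpace Ω] {μ : Measure Ω}

lemma integral_sq_div_proportional_abs (e : Ω → ℝ) (p : ℝ) :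
    ∫ ω, e ω ^ 2 / (p * |e ω| / ∫ ω', |e ω'| ∂μ) ∂μ = (∫ ω, |e ω| ∂μ) ^ 2 / p := by
  simp_rw [sq_div_mul_abs_div]
  rw [integral_mul_const, sq, mul_div_assoc]

lemma sq_integral_abs_div_le_integral_sq_div {e w : Ω → ℝ} {p : ℝ} (hp : 0 < p)
    (he : Integrable (fun ω => |e ω|) μ) (hw : Integrable w μ) (hw_pos : ∀ᵐ ω ∂μ, 0 < w ω)
    (hwp : ∫ ω, w ω ∂μ ≤ p) (hew : Integrable (fun ω => e ω ^ 2 / w ω) μ) :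
    (∫ ω, |e ω| ∂μ) ^ 2 / p ≤ ∫ ω, e ω ^ 2 / w ω ∂μ := by
  set A := ∫ ω, |e ω| ∂μ
  set c := A / p
  have hlin : Integrable (fun ω => 2 * c * |e ω| - c ^ 2 * w ω) μ :=
    (he.const_mul _).sub (hw.const_mul _)
  calc A ^ 2 / p = 2 * c * A - c ^ 2 * p := by simp only [c]; field_simp; ring
    _ ≤ 2 * c * A - c ^ 2 * ∫ ω, w ω ∂μ := by gcongr
    _ = ∫ ω, 2 * c * |e ω| - c ^ 2 * w ω ∂μ := by
      rw [integral_sub (he.const_mul _) (hw.const_mul _), integral_const_mul, integral_const_mul]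
    _ ≤ ∫ ω, e ω ^ 2 / w ω ∂μ := integral_mono_ae hlin hew <| hw_pos.mono fun ω hω =>
      two_mul_mul_abs_sub_sq_mul_le_sq_div c (e ω) hω

end

theorem oracle_sampling_rule_optimal_xy_general
    {Ω 𝒳 : Type*} [MeasurableSpace Ω] [MeasurableSpace 𝒳]
    (μ : Measure Ω) [IsProbabilityMeasure μ]
    (X : Ω → 𝒳) (Y : Ω → ℝ) (f : 𝒳 → ℝ) (p : ℝ)
    (hX : Measurable X) (hY : Measurable Y)
    (hp : p ∈ Set.Ioo (0 : ℝ) 1)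
    (habs_int : Integrable (fun ω => |Y ω - f (X ω)|) μ)
    -- π̃_opt(X,Y) = p·|Y − f(X)|/E|Y − f(X)|, assumed to take values in (0,1]
    (πopt : Ω → ℝ)
    (hπopt : πopt = fun ω => p * |Y ω - f (X ω)| / ∫ ω', |Y ω' - f (X ω')| ∂μ) :
    (∀ π : 𝒳 × ℝ → ℝ, Measurable π →
        (∀ᵐ ω ∂μ, π (X ω, Y ω) ∈ Set.Ioc (0 : ℝ) 1) →
        (∫ ω, π (X ω, Y ω) ∂μ) ≤ p →
        Integrable (fun ω => (Y ω - f (X ω)) ^ 2 / π (X ω, Y ω)) μ →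
        ∫ ω, (Y ω - f (X ω)) ^ 2 / πopt ω ∂μ
          ≤ ∫ ω, (Y ω - f (X ω)) ^ 2 / π (X ω, Y ω) ∂μ) ∧
      ∫ ω, (Y ω - f (X ω)) ^ 2 / πopt ω ∂μ
        = (∫ ω, |Y ω - f (X ω)| ∂μ) ^ 2 / p := by
  have hopt : ∫ ω, (Y ω - f (X ω)) ^ 2 / πopt ω ∂μ = (∫ ω, |Y ω - f (X ω)| ∂μ) ^ 2 / p := by
    subst hπopt
    exact integral_sq_div_proportional_abs (fun ω => Y ω - f (X ω)) p
  refine ⟨fun π hπ hπ01 hπp hint => ?_, hopt⟩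
  have hπXY : Integrable (fun ω => π (X ω, Y ω)) μ :=
    .of_bound (hπ.comp (hX.prodMk hY)).aestronglyMeasurable 1 <| hπ01.mono fun _ h => by
      rw [Real.norm_eq_abs, abs_of_pos h.1]; exact h.2
  rw [hopt]
  exact sq_integral_abs_div_le_integral_sq_div hp.1 habs_int hπXY (hπ01.mono fun _ h => h.1)
    hπp hint

/-- **Optimality of the label-dependent oracle rule `π̃_opt(X,Y) ∝ |Y − f(X)|`.**
If `π̃_opt(X,Y) = p·|Y − f(X)|/E|Y − f(X)|` takes values in `(0,1]`, then among all
rules `π̃` depending on `(X,Y)` with `0 < π̃(X,Y) ≤ 1` a.s. and `E[π̃(X,Y)] ≤ p`, the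
objective `E[(Y − f(X))²/π̃(X,Y)]` is minimized by `π̃_opt`, with minimum value
`(E|Y − f(X)|)²/p`. -/
theorem oracle_sampling_rule_optimal_xy
    {Ω 𝒳 : Type*} [MeasurableSpace Ω] [MeasurableSpace 𝒳]
    (μ : Measure Ω) [IsProbabilityMeasure μ]
    (X : Ω → 𝒳) (Y : Ω → ℝ) (f : 𝒳 → ℝ) (p : ℝ)
    (hX : Measurable X) (hY : Measurable Y) (hf : Measurable f)
    (hp : p ∈ Set.Ioo (0 : ℝ) 1)
    (habs_pos : 0 < ∫ ω, |Y ω - f (X ω)| ∂μ)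
    (habs_int : Integrable (fun ω => |Y ω - f (X ω)|) μ)
    -- π̃_opt(X,Y) = p·|Y − f(X)|/E|Y − f(X)|, assumed to take values in (0,1]
    (πopt : Ω → ℝ)
    (hπopt : πopt = fun ω => p * |Y ω - f (X ω)| / ∫ ω', |Y ω' - f (X ω')| ∂μ)
    (hπopt1 : ∀ᵐ ω ∂μ, πopt ω ∈ Set.Ioc (0 : ℝ) 1)
    (hoptint : Integrable (fun ω => (Y ω - f (X ω)) ^ 2 / πopt ω) μ) :
    (∀ π : 𝒳 × ℝ → ℝ, Measurable π →
        (∀ᵐ ω ∂μ, π (X ω, Y ω) ∈ Set.Ioc (0 : ℝ) 1) →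
        (∫ ω, π (X ω, Y ω) ∂μ) ≤ p →
        Integrable (fun ω => (Y ω - f (X ω)) ^ 2 / π (X ω, Y ω)) μ →
        ∫ ω, (Y ω - f (X ω)) ^ 2 / πopt ω ∂μ
          ≤ ∫ ω, (Y ω - f (X ω)) ^ 2 / π (X ω, Y ω) ∂μ) ∧
      ∫ ω, (Y ω - f (X ω)) ^ 2 / πopt ω ∂μ
        = (∫ ω, |Y ω - f (X ω)| ∂μ) ^ 2 / p :=
  oracle_sampling_rule_optimal_xy_general μ X Y f p hX hY hp habs_int πopt hπopt
end
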